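/- arXiv:1707.06893 — 5 statements merged into one kernel-verified Lean document; each statement's English description precedes it below -/
import Mathlib

section
/- Let n, k be natural numbers with 2 ≤ k ≤ n/2 and 2 ≤ k+1 ≤ (n-1)/2. Then C(n, k) = C(n-1, k+1) if and only if there exists a natural number i ≥ 1 such that n = F(2i+2)·F(2i+3) and k = F(2i)·F(2i+3), where F denotes the Fibonacci sequence (F(0) = 0, F(1) = 1, F(j+1) = F(j) + F(j-1)) and C denotes the binomial coefficient. -/
/-- Cassini's identity over ℤ. -/
lemma zcassini : ∀ m : ℕ, (Nat.fib (m+1) : ℤ)^2 = Nat.fib m * Nat.fib (m+2) + (-1)^m := by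
  intro m
  induction m with
  | zero => simp
  | succ m ih =>
    have h := Nat.fib_add_two (n := m)
    push_cast [Nat.fib_add_two (n := m+1), h]
    push_cast [h] at ih
    ring_nf
    ring_nf at ih
    linarith [ih]

lemma cassini_even (i : ℕ) : (Nat.fib (2*i+1) : ℤ)^2 =
    Nat.fib (2*i) * ((Nat.fib (2*i) : ℤ) + Nat.fib (2*i+1)) + 1 := by
  have h := zcassini (2*i)
  have e : ((-1:ℤ))^(2*i) = 1 := by rw [pow_mul]; norm_num
  rw [e] at h
  have f2 : Nat.fib (2*i+2) = Nat.fib (2*i) + Nat.fib (2*i+1) := Nat.fib_add_two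
  rw [f2] at h
  push_cast at h ⊢
  linarith

lemma fib23 (i : ℕ) : Nat.fib (2*i+2) = Nat.fib (2*i) + Nat.fib (2*i+1) ∧
    Nat.fib (2*i+3) = Nat.fib (2*i) + 2 * Nat.fib (2*i+1) := by
  have f2 : Nat.fib (2*i+2) = Nat.fib (2*i) + Nat.fib (2*i+1) := Nat.fib_add_two
  have f3 : Nat.fib (2*i+3) = Nat.fib (2*i+1) + Nat.fib (2*i+2) := Nat.fib_add_two (n := 2*i+1)
  omega

lemma fib4i (i : ℕ) : Nat.fib (4*i+2) = Nat.fib (2*i) * Nat.fib (2*i+1) + Nat.fib (2*i+1) * Nat.fib (2*i+2) ∧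
    Nat.fib (4*i+3) = Nat.fib (2*i+1) * Nat.fib (2*i+1) + Nat.fib (2*i+2) * Nat.fib (2*i+2) ∧
    Nat.fib (4*i+4) = Nat.fib (2*i+1) * Nat.fib (2*i+2) + Nat.fib (2*i+2) * Nat.fib (2*i+3) := by
  refine ⟨?_, ?_, ?_⟩
  · have h := Nat.fib_add (2*i) (2*i+1)
    have e : 2*i + (2*i+1) + 1 = 4*i+2 := by ring
    rw [e] at h; exact h
  · have h := Nat.fib_add (2*i+1) (2*i+1)
    have e : 2*i+1 + (2*i+1) + 1 = 4*i+3 := by ring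
    rw [e] at h; exact h
  · have h := Nat.fib_add (2*i+1) (2*i+2)
    have e : 2*i+1 + (2*i+2) + 1 = 4*i+4 := by ring
    rw [e] at h; exact h

lemma fibL1 (i : ℕ) : 5*(Nat.fib (2*i) * Nat.fib (2*i+3)) + 4 = Nat.fib (4*i+2) + Nat.fib (4*i+4) := by
  obtain ⟨h1, -, h3⟩ := fib4i i
  obtain ⟨f2, f3⟩ := fib23 i
  rw [h1, h3, f3, f2]
  have hcas := cassini_even i
  zify
  linear_combination (-4 : ℤ) * hcas

lemma fibL2 (i : ℕ) : 2*(Nat.fib (2*i+2) * Nat.fib (2*i+3)) =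
    Nat.fib (4*i+3) + 3*(Nat.fib (2*i) * Nat.fib (2*i+3)) + 2 := by
  obtain ⟨-, h2, -⟩ := fib4i i
  obtain ⟨f2, f3⟩ := fib23 i
  rw [h2, f3, f2]
  have hcas := cassini_even i
  zify
  linear_combination (2 : ℤ) * hcas

lemma fibL5 (i : ℕ) :
    (Nat.fib (2*i+2) * Nat.fib (2*i+3)) * (Nat.fib (2*i) * Nat.fib (2*i+3) + 1)
      + Nat.fib (2*i+1) * Nat.fib (2*i+3)
    = (Nat.fib (2*i+1) * Nat.fib (2*i+3)) * (Nat.fib (2*i+1) * Nat.fib (2*i+3)) := by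
  obtain ⟨f2, f3⟩ := fib23 i
  rw [f3, f2]
  have hcas := cassini_even i
  zify
  linear_combination (-((Nat.fib (2*i) : ℤ) + 2*Nat.fib (2*i+1))^2) * hcas

lemma fib_rec4 (m : ℕ) : Nat.fib (m+4) + Nat.fib m = 3 * Nat.fib (m+2) := by
  have a1 := Nat.fib_add_two (n := m)
  have a2 := Nat.fib_add_two (n := m+1)
  have a3 := Nat.fib_add_two (n := m+2)
  have e1 : m+1+2 = m+3 := by ring
  have e2 : m+2+2 = m+4 := by ring
  have e3 : m+1+1 = m+2 := by ring
  have e4 : m+2+1 = m+3 := by ring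
  rw [e1, e3] at a2
  rw [e2, e4] at a3
  omega

lemma fib_mod5 : ∀ j : ℕ, (Nat.fib (2*j) + Nat.fib (2*j+2)) % 5 = if j % 2 = 0 then 1 else 4 := by
  have key : ∀ j, (Nat.fib (2*j) + Nat.fib (2*j+2)) % 5 = (if j % 2 = 0 then 1 else 4) ∧
      (Nat.fib (2*j+2) + Nat.fib (2*j+4)) % 5 = (if (j+1) % 2 = 0 then 1 else 4) := by
    intro j
    induction j with
    | zero => simp [Nat.fib]
    | succ j ih =>
      obtain ⟨h1, h2⟩ := ih
      have e1 : 2*(j+1) = 2*j+2 := by ring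
      rw [e1]
      have f1 : 2*j+2+2 = 2*j+4 := rfl
      have f2 : 2*j+2+4 = 2*j+6 := rfl
      rw [f1, f2]
      refine ⟨h2, ?_⟩
      have r1 := fib_rec4 (2*j)
      have r2 := fib_rec4 (2*j+2)
      have e4 : 2*j+2+4 = 2*j+6 := by ring
      have e5 : 2*j+2+2 = 2*j+4 := by ring
      rw [e4, e5] at r2
      rcases Nat.mod_two_eq_zero_or_one j with hp | hp <;>
        simp [hp, Nat.add_mod] at h1 h2 ⊢ <;> omega
  exact fun j => (key j).1

lemma pell_class : ∀ y x : ℕ, x*x + 4 = 5*(y*y) →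
    ∃ j, y = Nat.fib (2*j+1) ∧ x = Nat.fib (2*j) + Nat.fib (2*j+2) := by
  intro y
  induction y using Nat.strong_induction_on with
  | _ y ih =>
    intro x h
    by_cases hy : y ≤ 2
    · interval_cases y
      · omega
      · have hx : x = 1 := by nlinarith
        exact ⟨0, by simp [hx, Nat.fib]⟩
      · have hx : x = 4 := by nlinarith [Nat.lt_or_ge x 4, Nat.lt_or_ge x 5]
        subst hx
        exact ⟨1, by decide⟩
    · push_neg at hy
      have hpx : x*x % 2 = x % 2 := by
        rw [Nat.mul_mod]; rcases Nat.mod_two_eq_zero_or_one x with h'|h' <;> simp [h']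
      have hpy : y*y % 2 = y % 2 := by
        rw [Nat.mul_mod]; rcases Nat.mod_two_eq_zero_or_one y with h'|h' <;> simp [h']
      have hpar : x % 2 = y % 2 := by omega
      have hxy : y < x := by nlinarith
      have hb1 : 5*y ≤ 3*x := by nlinarith
      have hb2 : x + 2 ≤ 3*y := by nlinarith
      set x' := (3*x - 5*y)/2 with hx'
      set y' := (3*y - x)/2 with hy'
      have e1 : 3*x = 5*y + 2*x' := by omega
      have e2 : 3*y = x + 2*y' := by omega
      have hy'lt : y' < y := by omega
      have heq' : x'*x' + 4 = 5*(y'*y') := by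
        have h4 : 4*(x'*x') + 16 = 20*(y'*y') := by nlinarith [e1, e2, h]
        omega
      obtain ⟨j, hj1, hj2⟩ := ih y' hy'lt x' heq'
      refine ⟨j+1, ?_, ?_⟩
      · have f1 := Nat.fib_add_two (n := 2*j)
        have f2 := Nat.fib_add_two (n := 2*j+1)
        have g1 : 2*(j+1)+1 = 2*j+1+2 := by ring
        have g2 : 2*j+1+1 = 2*j+2 := rfl
        rw [g2] at f2
        rw [g1, f2]
        omega
      · have f1 := Nat.fib_add_two (n := 2*j)
        have f2 := Nat.fib_add_two (n := 2*j+1)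
        have f3 := Nat.fib_add_two (n := 2*j+2)
        have g2 : 2*j+1+1 = 2*j+2 := rfl
        have g3 : 2*j+1+2 = 2*j+3 := rfl
        have g4 : 2*j+2+2 = 2*j+4 := rfl
        have g5 : 2*j+2+1 = 2*j+3 := rfl
        rw [g2, g3] at f2
        rw [g4, g5] at f3
        have g6 : 2*(j+1) = 2*j+2 := by ring
        have g7 : 2*(j+1)+2 = 2*j+4 := by omega
        rw [g7, g6]
        omega

lemma choose_iff (n k : ℕ) (hn : 2*k+3 ≤ n) :
    Nat.choose n k = Nat.choose (n-1) (k+1) ↔ n*(k+1) = (n-k)*(n-k-1) := by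
  have h1 := Nat.choose_mul_succ_eq (n-1) k
  rw [show n-1+1 = n from by omega] at h1
  have h2 := Nat.choose_succ_right_eq (n-1) k
  obtain ⟨a, ha⟩ : ∃ a, n - k = a := ⟨n-k, rfl⟩
  have ha1 : n - 1 - k = a - 1 := by omega
  rw [ha1] at h2
  rw [ha] at h1
  rw [ha]
  have key : Nat.choose (n-1) (k+1) * ((k+1)*n) = Nat.choose n k * (a*(a-1)) := by
    calc Nat.choose (n-1) (k+1) * ((k+1)*n) = (Nat.choose (n-1) (k+1) * (k+1))*n := by ring
    _ = (Nat.choose (n-1) k * (a-1))*n := by rw [h2]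
    _ = (Nat.choose (n-1) k * n)*(a-1) := by ring
    _ = (Nat.choose n k * a)*(a-1) := by rw [h1]
    _ = Nat.choose n k * (a*(a-1)) := by ring
  constructor
  · intro h
    rw [← h] at key
    have hpos : 0 < Nat.choose n k := Nat.choose_pos (by omega)
    have h3 := Nat.eq_of_mul_eq_mul_left hpos key
    rw [mul_comm]; exact h3
  · intro h
    have : Nat.choose (n-1) (k+1) * ((k+1)*n) = Nat.choose n k * ((k+1)*n) := by
      rw [key]; congr 1; rw [← h]; ring
    have hpos : 0 < (k+1)*n := Nat.mul_pos (by omega) (by omega)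
    exact (Nat.eq_of_mul_eq_mul_right hpos this).symm

theorem collision_n_sub_one_k_add_one (n k : ℕ)
    (hk2 : 2 ≤ k) (hkn : k ≤ n / 2)
    (hl2 : 2 ≤ k + 1) (hlm : k + 1 ≤ (n - 1) / 2) :
    Nat.choose n k = Nat.choose (n - 1) (k + 1) ↔
      ∃ i : ℕ, 1 ≤ i ∧
        n = Nat.fib (2 * i + 2) * Nat.fib (2 * i + 3) ∧
        k = Nat.fib (2 * i) * Nat.fib (2 * i + 3) := by
  have hn : 2*k+3 ≤ n := by omega
  rw [choose_iff n k hn]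
  constructor
  · intro h
    -- turn into Pell equation
    have hp : (5*k+4)*(5*k+4) + 4 = 5*((2*n - 3*k - 2)*(2*n - 3*k - 2)) := by
      zify [show k ≤ n from by omega, show 1 ≤ n - k from by omega,
            show 3*k ≤ 2*n from by omega, show 2 ≤ 2*n - 3*k from by omega] at h ⊢
      linear_combination (20 : ℤ) * h
    obtain ⟨j, hj1, hj2⟩ := pell_class (2*n - 3*k - 2) (5*k+4) hp
    -- j is odd
    have hm := fib_mod5 j
    rw [← hj2] at hm
    have hjodd : j % 2 = 1 := by
      rcases Nat.mod_two_eq_zero_or_one j with hp' | hp' <;> simp [hp'] at hm <;> omega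
    obtain ⟨i, hi⟩ : ∃ i, j = 2*i+1 := ⟨(j-1)/2, by omega⟩
    subst hi
    refine ⟨i, ?_, ?_, ?_⟩
    · -- i ≥ 1
      rcases Nat.eq_zero_or_pos i with h0 | h1
      · subst h0
        have : Nat.fib (2*1) + Nat.fib (2*1+2) = 4 := by decide
        rw [show 2*(2*0+1) = 2*1 from by ring, show 2*(2*0+1)+2 = 2*1+2 from by ring] at hj2
        omega
      · exact h1
    · -- n
      have l2 := fibL2 i
      have l1 := fibL1 i
      have e1 : 2*(2*i+1) = 4*i+2 := by ring
      have e2 : 2*(2*i+1)+2 = 4*i+4 := by omega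
      have e3 : 2*(2*i+1)+1 = 4*i+3 := by omega
      rw [e2, e1] at hj2
      rw [e3] at hj1
      omega
    · -- k
      have l1 := fibL1 i
      have e1 : 2*(2*i+1) = 4*i+2 := by ring
      have e2 : 2*(2*i+1)+2 = 4*i+4 := by omega
      rw [e2, e1] at hj2
      omega
  · rintro ⟨i, hi1, hni, hki⟩
    obtain ⟨f2, f3⟩ := fib23 i
    have hvpos : 1 ≤ Nat.fib (2*i+1) * Nat.fib (2*i+3) :=
      Nat.mul_pos (Nat.fib_pos.mpr (by omega)) (Nat.fib_pos.mpr (by omega))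
    have e1 : n - k = Nat.fib (2*i+1) * Nat.fib (2*i+3) := by
      rw [hni, hki, f2, add_mul]
      omega
    rw [e1, hni, hki]
    have h5 := fibL5 i
    zify [hvpos]
    zify at h5
    linear_combination h5
end

section
/- For every natural number x ≥ 1, C(12x² − 12x + 3, 3) + C(x, 2) = C(24x³ − 36x² + 15x − 1, 2), where C denotes the binomial coefficient. -/
theorem near_collision_family_one (x a : ℕ) (hx : 1 ≤ x)
    (ha : (a : ℤ) = 24 * (x : ℤ) ^ 3 - 36 * (x : ℤ) ^ 2 + 15 * (x : ℤ) - 1) :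
    Nat.choose (12 * x ^ 2 - 12 * x + 3) 3 + Nat.choose x 2 = Nat.choose a 2 := by
  have h12 : 12 * x ≤ 12 * x ^ 2 := by nlinarith
  have key : 6 * (Nat.choose (12 * x ^ 2 - 12 * x + 3) 3 + Nat.choose x 2)
      = 6 * Nat.choose a 2 := by
    have e1 := Nat.descFactorial_eq_factorial_mul_choose (12 * x ^ 2 - 12 * x + 3) 3
    have e2 := Nat.descFactorial_eq_factorial_mul_choose x 2
    have e3 := Nat.descFactorial_eq_factorial_mul_choose a 2
    have c1 : ((Nat.descFactorial (12 * x ^ 2 - 12 * x + 3) 3 : ℕ) : ℤ)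
        = 6 * Nat.choose (12 * x ^ 2 - 12 * x + 3) 3 := by
      rw [e1]; push_cast; norm_num [Nat.factorial]
    have c2 : ((Nat.descFactorial x 2 : ℕ) : ℤ) = 2 * Nat.choose x 2 := by
      rw [e2]; push_cast; norm_num [Nat.factorial]
    have c3 : ((Nat.descFactorial a 2 : ℕ) : ℤ) = 2 * Nat.choose a 2 := by
      rw [e3]; push_cast; norm_num [Nat.factorial]
    have d1 : ((Nat.descFactorial (12 * x ^ 2 - 12 * x + 3) 3 : ℕ) : ℤ)
        = ((12 * (x:ℤ) ^ 2 - 12 * x + 3)) * ((12 * (x:ℤ) ^ 2 - 12 * x + 2)) * ((12 * (x:ℤ) ^ 2 - 12 * x + 1)) := by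
      simp [Nat.descFactorial]
      push_cast [Nat.sub_add_comm, h12]
      ring
    have d3 : ((Nat.descFactorial a 2 : ℕ) : ℤ) = (a : ℤ) * ((a : ℤ) - 1) := by
      simp [Nat.descFactorial]
      rcases Nat.eq_zero_or_pos a with h | h
      · simp [h]
      · rw [Nat.cast_pred h]
        ring
    have d2 : ((Nat.descFactorial x 2 : ℕ) : ℤ) = (x : ℤ) * ((x : ℤ) - 1) := by
      simp [Nat.descFactorial]
      push_cast [Nat.cast_pred hx]
      ring
    have : (6 * (Nat.choose (12 * x ^ 2 - 12 * x + 3) 3 + Nat.choose x 2) : ℤ)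
        = (6 * Nat.choose a 2 : ℤ) := by
      have := d1; have := d2; have := d3
      nlinarith [c1, c2, c3, d1, d2, d3, ha, sq_nonneg ((x:ℤ))]
    exact_mod_cast this
  omega
end

section
/- For every natural number x ≥ 1, C(12x² − 12x + 5, 3) + C(x, 2) = C(24x³ − 36x² + 21x − 4, 2), where C denotes the binomial coefficient. -/
lemma c2 (n : ℕ) : Nat.choose (n + 2) 2 * 2 = (n + 2) * (n + 1) := by
  induction n with
  | zero => decide
  | succ k ih =>
    have h : Nat.choose (k + 3) 2 = Nat.choose (k + 2) 1 + Nat.choose (k + 2) 2 :=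
      Nat.choose_succ_succ (k + 2) 1
    simp only [Nat.choose_one_right] at h
    have e : k + 1 + 2 = k + 3 := rfl
    rw [e]
    nlinarith [h, ih]

lemma c3 (n : ℕ) : Nat.choose (n + 3) 3 * 6 = (n + 3) * (n + 2) * (n + 1) := by
  induction n with
  | zero => decide
  | succ k ih =>
    have h : Nat.choose (k + 4) 3 = Nat.choose (k + 3) 2 + Nat.choose (k + 3) 3 :=
      Nat.choose_succ_succ (k + 3) 2
    have h2 := c2 (k + 1)
    have : (k + 1 + 2) = k + 3 := by ring
    rw [this] at h2
    nlinarith [h, h2, ih]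

theorem near_collision_family_two (x a : ℕ) (hx : 1 ≤ x)
    (ha : (a : ℤ) = 24 * (x : ℤ) ^ 3 - 36 * (x : ℤ) ^ 2 + 21 * (x : ℤ) - 4) :
    Nat.choose (12 * x ^ 2 - 12 * x + 5) 3 + Nat.choose x 2 = Nat.choose a 2 := by
  obtain ⟨y, rfl⟩ := Nat.exists_eq_add_of_le hx
  have hxe : 1 + y = y + 1 := by ring
  rw [hxe] at ha ⊢
  have ha' : a = 24 * y ^ 3 + 36 * y ^ 2 + 21 * y + 5 := by
    have : (a : ℤ) = ((24 * y ^ 3 + 36 * y ^ 2 + 21 * y + 5 : ℕ) : ℤ) := by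
      push_cast [ha]; ring
    exact_mod_cast this
  subst ha'
  have hm : 12 * (y + 1) ^ 2 - 12 * (y + 1) + 5 = (12 * y ^ 2 + 12 * y + 2) + 3 := by
    have : 12 * (y + 1) ^ 2 = 12 * (y + 1) + (12 * y ^ 2 + 12 * y) := by ring
    omega
  rw [hm]
  have h3 := c3 (12 * y ^ 2 + 12 * y + 2)
  have h2a := c2 (24 * y ^ 3 + 36 * y ^ 2 + 21 * y + 3)
  have h2b : Nat.choose (y + 1) 2 * 2 = (y + 1) * y := by
    cases y with
    | zero => decide
    | succ k =>
      have := c2 k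
      have e : k + 1 + 1 = k + 2 := rfl
      rw [e]; omega
  have e1 : 24 * y ^ 3 + 36 * y ^ 2 + 21 * y + 3 + 2 = 24 * y ^ 3 + 36 * y ^ 2 + 21 * y + 5 := by ring
  rw [e1] at h2a
  nlinarith [h3, h2a, h2b]
end

section
/- For every natural number x ≥ 1, C(60x² − 60x + 15, 5) + C(x, 2) = C(a, 2), where a = 3600x⁵ − 9000x⁴ + 8700x³ − 4050x² + 905x − 77 and C denotes the binomial coefficient. -/
theorem near_collision_family_three (x a : ℕ) (hx : 1 ≤ x)
    (ha : (a : ℤ) = 3600 * (x : ℤ) ^ 5 - 9000 * (x : ℤ) ^ 4 + 8700 * (x : ℤ) ^ 3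
        - 4050 * (x : ℤ) ^ 2 + 905 * (x : ℤ) - 77) :
    Nat.choose (60 * x ^ 2 - 60 * x + 15) 5 + Nat.choose x 2 = Nat.choose a 2 := by
  have hx' : (1 : ℤ) ≤ (x : ℤ) := by exact_mod_cast hx
  have h60 : 60 * x ≤ 60 * x ^ 2 := by nlinarith
  set m := 60 * x ^ 2 - 60 * x + 15 with hmdef
  have hm : (m : ℤ) = 60 * (x : ℤ) ^ 2 - 60 * (x : ℤ) + 15 := by
    have : m = 60 * x ^ 2 - 60 * x + 15 := hmdef
    push_cast [this, Nat.cast_sub h60]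
    ring
  have hm15 : 15 ≤ m := by omega
  have ht : (0 : ℤ) ≤ (x : ℤ) - 1 := by linarith
  have ha1 : 1 ≤ a := by
    have : (1 : ℤ) ≤ (a : ℤ) := by
      rw [ha]
      nlinarith [pow_nonneg ht 5, pow_nonneg ht 4, pow_nonneg ht 3, pow_nonneg ht 2, ht]
    exact_mod_cast this
  have hd5 : ∀ n : ℕ, n.descFactorial 5 = (n - 4) * (n - 3) * (n - 2) * (n - 1) * n := by
    intro n
    simp [Nat.descFactorial_succ, Nat.descFactorial_zero]
    try ring
  have hd2 : ∀ n : ℕ, n.descFactorial 2 = (n - 1) * n := by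
    intro n
    simp [Nat.descFactorial_succ, Nat.descFactorial_zero]
    try ring
  -- descending factorials
  have d5 : (m.descFactorial 5 : ℤ) = 120 * m.choose 5 := by
    rw [Nat.descFactorial_eq_factorial_mul_choose]; push_cast; norm_num [Nat.factorial]
  have d5' : (m.descFactorial 5 : ℤ)
      = ((m : ℤ) - 4) * ((m : ℤ) - 3) * ((m : ℤ) - 2) * ((m : ℤ) - 1) * (m : ℤ) := by
    rw [hd5 m, Nat.cast_mul, Nat.cast_mul, Nat.cast_mul, Nat.cast_mul,
      Nat.cast_sub (by omega : 4 ≤ m), Nat.cast_sub (by omega : 3 ≤ m),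
      Nat.cast_sub (by omega : 2 ≤ m), Nat.cast_sub (by omega : 1 ≤ m)]
    push_cast
    ring
  have dx : (x.descFactorial 2 : ℤ) = 2 * x.choose 2 := by
    rw [Nat.descFactorial_eq_factorial_mul_choose]; push_cast; norm_num [Nat.factorial]
  have dx' : (x.descFactorial 2 : ℤ) = ((x : ℤ) - 1) * (x : ℤ) := by
    rw [hd2 x, Nat.cast_mul, Nat.cast_sub hx]
    push_cast
    ring
  have da : (a.descFactorial 2 : ℤ) = 2 * a.choose 2 := by
    rw [Nat.descFactorial_eq_factorial_mul_choose]; push_cast; norm_num [Nat.factorial]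
  have da' : (a.descFactorial 2 : ℤ) = ((a : ℤ) - 1) * (a : ℤ) := by
    rw [hd2 a, Nat.cast_mul, Nat.cast_sub ha1]
    push_cast
    ring
  have key : 120 * ((m.choose 5 : ℤ) + (x.choose 2 : ℤ)) = 120 * (a.choose 2 : ℤ) := by
    have e1 : (120 : ℤ) * m.choose 5
        = ((m : ℤ) - 4) * ((m : ℤ) - 3) * ((m : ℤ) - 2) * ((m : ℤ) - 1) * (m : ℤ) := by
      rw [← d5, d5']
    have e2 : (2 : ℤ) * x.choose 2 = ((x : ℤ) - 1) * (x : ℤ) := by rw [← dx, dx']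
    have e3 : (2 : ℤ) * a.choose 2 = ((a : ℤ) - 1) * (a : ℤ) := by rw [← da, da']
    have : ((m : ℤ) - 4) * ((m : ℤ) - 3) * ((m : ℤ) - 2) * ((m : ℤ) - 1) * (m : ℤ)
        + 60 * (((x : ℤ) - 1) * (x : ℤ)) = 60 * (((a : ℤ) - 1) * (a : ℤ)) := by
      rw [hm, ha]; ring
    linarith
  have := mul_left_cancel₀ (by norm_num : (120 : ℤ) ≠ 0) key
  exact_mod_cast this
end

section
/- For every natural number x ≥ 1, C(240x² − 240x + 62, 5) + C(3x − 1, 2) = C(a, 2), where a = 115200x⁵ − 288000x⁴ + 288000x³ − 144000x² + 35995x − 3597 and C denotes the binomial coefficient. -/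
theorem near_collision_family_five (x a : ℕ) (hx : 1 ≤ x)
    (ha : (a : ℤ) = 115200 * (x : ℤ) ^ 5 - 288000 * (x : ℤ) ^ 4 + 288000 * (x : ℤ) ^ 3
        - 144000 * (x : ℤ) ^ 2 + 35995 * (x : ℤ) - 3597) :
    Nat.choose (240 * x ^ 2 - 240 * x + 62) 5 + Nat.choose (3 * x - 1) 2 = Nat.choose a 2 := by
  obtain ⟨y, rfl⟩ : ∃ y, x = y + 1 := ⟨x - 1, by omega⟩
  have ha' : a = 115200*y^5 + 288000*y^4 + 288000*y^3 + 144000*y^2 + 35995*y + 3598 := by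
    have h : (a : ℤ) = ((115200*y^5 + 288000*y^4 + 288000*y^3 + 144000*y^2 + 35995*y
        + 3598 : ℕ) : ℤ) := by
      rw [ha]; push_cast; ring
    exact_mod_cast h
  subst ha'
  have h1 : 240 * (y+1)^2 - 240 * (y+1) + 62 = 240*y^2 + 240*y + 62 := by
    have : 240*(y+1)^2 = 240*y^2 + 480*y + 240 := by ring
    omega
  have h2 : 3*(y+1) - 1 = 3*y + 2 := by omega
  rw [h1, h2]
  apply Nat.eq_of_mul_eq_mul_left (show 0 < 120 by norm_num)
  have c5 : (120 : ℕ) * Nat.choose (240*y^2 + 240*y + 62) 5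
      = Nat.descFactorial (240*y^2 + 240*y + 62) 5 := by
    rw [Nat.descFactorial_eq_factorial_mul_choose]; norm_num [Nat.factorial]
  have c2 : ∀ n : ℕ, (2 : ℕ) * Nat.choose n 2 = Nat.descFactorial n 2 := by
    intro n
    rw [Nat.descFactorial_eq_factorial_mul_choose]; norm_num [Nat.factorial]
  have d5 : Nat.descFactorial (240*y^2 + 240*y + 62) 5
      = (240*y^2 + 240*y + 58) * (240*y^2 + 240*y + 59) * (240*y^2 + 240*y + 60)
        * (240*y^2 + 240*y + 61) * (240*y^2 + 240*y + 62) := by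
    simp only [Nat.descFactorial, Nat.sub_zero, Nat.mul_one]
    have e1 : 240*y^2 + 240*y + 62 - 1 = 240*y^2 + 240*y + 61 := by omega
    have e2 : 240*y^2 + 240*y + 62 - 2 = 240*y^2 + 240*y + 60 := by omega
    have e3 : 240*y^2 + 240*y + 62 - 3 = 240*y^2 + 240*y + 59 := by omega
    have e4 : 240*y^2 + 240*y + 62 - 4 = 240*y^2 + 240*y + 58 := by omega
    rw [e1, e2, e3, e4]; ring
  have d2a : Nat.descFactorial (3*y + 2) 2 = (3*y + 1) * (3*y + 2) := by
    simp only [Nat.descFactorial, Nat.sub_zero, Nat.mul_one]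
    have : 3*y + 2 - 1 = 3*y + 1 := by omega
    rw [this]
  have d2b : Nat.descFactorial (115200*y^5 + 288000*y^4 + 288000*y^3 + 144000*y^2
        + 35995*y + 3598) 2
      = (115200*y^5 + 288000*y^4 + 288000*y^3 + 144000*y^2 + 35995*y + 3597)
        * (115200*y^5 + 288000*y^4 + 288000*y^3 + 144000*y^2 + 35995*y + 3598) := by
    simp only [Nat.descFactorial, Nat.sub_zero, Nat.mul_one]
    have : 115200*y^5 + 288000*y^4 + 288000*y^3 + 144000*y^2 + 35995*y + 3598 - 1
        = 115200*y^5 + 288000*y^4 + 288000*y^3 + 144000*y^2 + 35995*y + 3597 := by omega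
    rw [this]
  calc 120 * (Nat.choose (240*y^2 + 240*y + 62) 5 + Nat.choose (3*y + 2) 2)
      = 120 * Nat.choose (240*y^2 + 240*y + 62) 5
        + 60 * (2 * Nat.choose (3*y + 2) 2) := by ring
    _ = Nat.descFactorial (240*y^2 + 240*y + 62) 5
        + 60 * Nat.descFactorial (3*y + 2) 2 := by rw [c5, c2]
    _ = 60 * ((115200*y^5 + 288000*y^4 + 288000*y^3 + 144000*y^2 + 35995*y + 3597)
        * (115200*y^5 + 288000*y^4 + 288000*y^3 + 144000*y^2 + 35995*y + 3598)) := by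
        rw [d5, d2a]; ring
    _ = 60 * Nat.descFactorial (115200*y^5 + 288000*y^4 + 288000*y^3 + 144000*y^2
        + 35995*y + 3598) 2 := by rw [d2b]
    _ = 60 * (2 * Nat.choose (115200*y^5 + 288000*y^4 + 288000*y^3 + 144000*y^2
        + 35995*y + 3598) 2) := by rw [c2]
    _ = 120 * Nat.choose (115200*y^5 + 288000*y^4 + 288000*y^3 + 144000*y^2
        + 35995*y + 3598) 2 := by ring
end
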